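/- Let 0 < β < 2 and let v : ℝ → ℝ be a 2π-periodic C³ function, and set u(x) = v(x) + Λ^β v(x) (so u is C¹). If u(x) ≥ 0 for all x, then |∂_x Λ^β v(x)| ≤ 4 · sup_y |∂_x u(y)| for every x ∈ ℝ, i.e. ‖∂_x Λ^β v‖_{L^∞} ≤ 4 ‖∂_x u‖_{L^∞}. -/

import Mathlib

open MeasureTheory Real

/-- The constant `c_σ = Γ(1+σ) cos((1−σ)π/2) / π`. -/
noncomputable def cFrac (σ : ℝ) : ℝ :=
  Real.Gamma (1 + σ) * Real.cos ((1 - σ) * Real.pi / 2) / Real.pi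

/-- The periodized kernel `K_σ(η) = ∑_{k∈ℤ} |η + 2kπ|^{-(1+σ)}`. -/
noncomputable def Kper (σ η : ℝ) : ℝ :=
  ∑' k : ℤ, |η + 2 * (k : ℝ) * Real.pi| ^ (-(1 + σ))

/-- The fractional Laplacian `Λ^σ f` of a `2π`-periodic function, defined by
`Λ^σ f(x) = (c_σ/2) ∫_{-π}^{π} (2f(x) − f(x+η) − f(x−η)) K_σ(η) dη`. -/
noncomputable def fracLap (σ : ℝ) (f : ℝ → ℝ) (x : ℝ) : ℝ :=
  (cFrac σ / 2) *
    ∫ η in (-Real.pi)..Real.pi, (2 * f x - f (x + η) - f (x - η)) * Kper σ η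

/-!
The second difference `2v(x) − v(x+η) − v(x−η)` is `O(η²)` while `K_β(η) ≤ |η|^{-(1+β)} + C`, so
the integrand of `Λ^β` is dominated by an integrable function of `η` uniformly in `x`, and one may
differentiate under the integral: `∂ₓΛ^β v = Λ^β w` with `w = ∂ₓv`, hence `w + Λ^β w = ∂ₓu`.
Since the kernel is nonnegative, `Λ^β w ≥ 0` at a maximum of the periodic function `w` and
`Λ^β w ≤ 0` at a minimum. Thus `max w ≤ sup |∂ₓu|` and `min w ≥ −sup |∂ₓu|`, and
`|Λ^β w| = |∂ₓu − w| ≤ 2 sup |∂ₓu|`.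
-/

open Set Filter

noncomputable def kernelTail (σ : ℝ) : ℝ := ∑' k : ℤ, |(k : ℝ)| ^ (-(1 + σ))

noncomputable def fracLapIntegrand (σ : ℝ) (f : ℝ → ℝ) (x η : ℝ) : ℝ :=
  (2 * f x - f (x + η) - f (x - η)) * Kper σ η

/-- Dominates `fracLapIntegrand σ f x` when `|f''| ≤ L`: the second difference is at most `2Lη²`
and `Kper σ η ≤ |η| ^ (-(1 + σ)) + kernelTail σ` on `[-π, π]`. -/
noncomputable def fracLapMajorant (σ L η : ℝ) : ℝ :=
  2 * L * (|η| ^ (1 - σ) + kernelTail σ * η ^ 2)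

lemma fracLap_eq_integral (σ : ℝ) (f : ℝ → ℝ) (x : ℝ) :
    fracLap σ f x = cFrac σ / 2 * ∫ η in (-π)..π, fracLapIntegrand σ f x η :=
  rfl

lemma Kper_nonneg (σ η : ℝ) : 0 ≤ Kper σ η :=
  tsum_nonneg fun _ => rpow_nonneg (abs_nonneg _) _

lemma measurable_Kper (σ : ℝ) : Measurable (Kper σ) :=
  Measurable.tsum fun _ => by fun_prop

section Kernel

variable {σ η : ℝ}

lemma summable_abs_int_rpow_neg (hσ : 0 < σ) :
    Summable fun k : ℤ => |(k : ℝ)| ^ (-(1 + σ)) := by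
  simpa using summable_abs_int_rpow (b := 1 + σ) (by linarith)

lemma rpow_abs_add_two_mul_int_mul_pi_le (hσ : -1 ≤ σ) (hη : |η| ≤ π) {k : ℤ} (hk : k ≠ 0) :
    |η + 2 * k * π| ^ (-(1 + σ)) ≤ |(k : ℝ)| ^ (-(1 + σ)) := by
  have hk1 : (1 : ℝ) ≤ |(k : ℝ)| := by exact_mod_cast Int.one_le_abs hk
  have htri : 2 * |(k : ℝ)| * π ≤ |η + 2 * k * π| + |η| := by
    calc 2 * |(k : ℝ)| * π = |(η + 2 * k * π) - η| := by
          rw [add_sub_cancel_left, abs_mul, abs_mul, abs_two, abs_of_pos pi_pos]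
      _ ≤ |η + 2 * k * π| + |η| := abs_sub _ _
  have hle : |(k : ℝ)| ≤ |η + 2 * k * π| := by nlinarith [pi_gt_three]
  exact rpow_le_rpow_of_nonpos (by linarith) hle (by linarith)

lemma Kper_le (hσ : 0 < σ) (hη : |η| ≤ π) : Kper σ η ≤ |η| ^ (-(1 + σ)) + kernelTail σ := by
  have hmajor : HasSum (fun k : ℤ => (if k = 0 then |η| ^ (-(1 + σ)) else 0) + |(k : ℝ)| ^ (-(1 + σ)))
      (|η| ^ (-(1 + σ)) + kernelTail σ) :=
    (hasSum_ite_eq 0 _).add (summable_abs_int_rpow_neg hσ).hasSum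
  have hterm : ∀ k : ℤ, |η + 2 * k * π| ^ (-(1 + σ)) ≤
      (if k = 0 then |η| ^ (-(1 + σ)) else 0) + |(k : ℝ)| ^ (-(1 + σ)) := by
    intro k
    rcases eq_or_ne k 0 with rfl | hk
    · simpa using rpow_nonneg (abs_nonneg (0 : ℝ)) (-(1 + σ))
    · simpa [hk] using rpow_abs_add_two_mul_int_mul_pi_le (by linarith) hη hk
  have hsum : Summable fun k : ℤ => |η + 2 * k * π| ^ (-(1 + σ)) :=
    hmajor.summable.of_nonneg_of_le (fun _ => rpow_nonneg (abs_nonneg _) _) hterm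
  exact (hsum.tsum_le_tsum hterm hmajor.summable).trans_eq hmajor.tsum_eq

end Kernel

lemma abs_sub_le_of_abs_deriv_le {f f' : ℝ → ℝ} {L : ℝ} (hf : ∀ t, HasDerivAt f (f' t) t)
    (hL : ∀ t, |f' t| ≤ L) (a b : ℝ) : |f a - f b| ≤ L * |a - b| := by
  simpa [Real.norm_eq_abs] using convex_univ.norm_image_sub_le_of_norm_hasDerivWithin_le
    (fun t _ => (hf t).hasDerivWithinAt) (fun t _ => hL t) (mem_univ b) (mem_univ a)

/-- `t ↦ f (x + t) + f (x - t)` has derivative `f' (x + t) - f' (x - t)`, of size at most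
`2 L |t|`; the mean value theorem on `[0, η]` gives the bound. -/
lemma abs_two_mul_sub_sub_le {f f' : ℝ → ℝ} {L : ℝ} (hf : ∀ t, HasDerivAt f (f' t) t)
    (hf' : ∀ a b, |f' a - f' b| ≤ L * |a - b|) (x η : ℝ) :
    |2 * f x - f (x + η) - f (x - η)| ≤ 2 * L * η ^ 2 := by
  set g : ℝ → ℝ := fun t => f (x + t) + f (x - t)
  have hg : ∀ t, HasDerivAt g (f' (x + t) - f' (x - t)) t := fun t =>
    (((hf (x + t)).comp_const_add x t).add ((hf (x - t)).comp_const_sub x t)).congr_deriv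
      (sub_eq_add_neg _ _).symm
  have hg' : ∀ t ∈ uIcc 0 η, ‖f' (x + t) - f' (x - t)‖ ≤ 2 * L * |η| := fun t ht => by
    have ht' : |t| ≤ |η| := by simpa using abs_sub_left_of_mem_uIcc ht
    have hL : 0 ≤ L := by simpa using (abs_nonneg _).trans (hf' 0 1)
    calc ‖f' (x + t) - f' (x - t)‖ ≤ L * |(x + t) - (x - t)| := hf' _ _
      _ = 2 * L * |t| := by rw [add_sub_sub_cancel, ← two_mul, abs_mul, abs_two]; ring
      _ ≤ 2 * L * |η| := by gcongr
  have hmvt := convex_uIcc 0 η |>.norm_image_sub_le_of_norm_hasDerivWithin_le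
    (fun t _ => (hg t).hasDerivWithinAt) hg' left_mem_uIcc right_mem_uIcc
  calc |2 * f x - f (x + η) - f (x - η)| = ‖g η - g 0‖ := by
        rw [Real.norm_eq_abs, ← abs_neg]; simp only [g, add_zero, sub_zero]; ring_nf
    _ ≤ 2 * L * |η| * ‖η - 0‖ := hmvt
    _ = 2 * L * η ^ 2 := by rw [sub_zero, Real.norm_eq_abs, mul_assoc, ← sq, sq_abs]

lemma intervalIntegrable_abs_rpow {r : ℝ} (hr : -1 < r) (a b : ℝ) :
    IntervalIntegrable (fun x : ℝ => |x| ^ r) volume a b := by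
  have hpos : ∀ c, 0 ≤ c → IntervalIntegrable (fun x : ℝ => |x| ^ r) volume 0 c := by
    intro c hc
    refine (intervalIntegral.intervalIntegrable_rpow' hr).congr fun x hx => ?_
    rw [uIoc_of_le hc] at hx
    simp only [abs_of_pos hx.1]
  have hzero : ∀ c, IntervalIntegrable (fun x : ℝ => |x| ^ r) volume 0 c := by
    intro c
    rcases le_total 0 c with hc | hc
    · exact hpos c hc
    · rw [IntervalIntegrable.iff_comp_neg, neg_zero]
      simpa using hpos (-c) (by linarith)
  exact (hzero a).symm.trans (hzero b)

section Integrand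

variable {σ L : ℝ} {f : ℝ → ℝ}

lemma measurable_fracLapIntegrand (σ : ℝ) (hf : Measurable f) (x : ℝ) :
    Measurable (fracLapIntegrand σ f x) :=
  ((measurable_const.sub (hf.comp (measurable_const_add x))).sub
    (hf.comp (measurable_const_sub x))).mul (measurable_Kper σ)

lemma hasDerivAt_fracLapIntegrand (σ : ℝ) (hf : Differentiable ℝ f) (x η : ℝ) :
    HasDerivAt (fun y => fracLapIntegrand σ f y η) (fracLapIntegrand σ (deriv f) x η) x :=
  ((((hf x).hasDerivAt.const_mul 2).sub ((hf (x + η)).hasDerivAt.comp_add_const x η)).sub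
    ((hf (x - η)).hasDerivAt.comp_sub_const x η)).mul_const (Kper σ η)

lemma intervalIntegrable_fracLapMajorant (hσ : σ < 2) (L : ℝ) :
    IntervalIntegrable (fracLapMajorant σ L) volume (-π) π :=
  ((intervalIntegrable_abs_rpow (by linarith) _ _).add
    ((continuous_const.mul (continuous_pow 2)).intervalIntegrable _ _)).const_mul (2 * L)

lemma abs_fracLapIntegrand_le (hσ : 0 < σ) (hf : ContDiff ℝ 2 f)
    (hL : ∀ t, |deriv (deriv f) t| ≤ L) (x : ℝ) {η : ℝ} (hη0 : η ≠ 0) (hη : |η| ≤ π) :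
    |fracLapIntegrand σ f x η| ≤ fracLapMajorant σ L η := by
  have hd : ∀ t, HasDerivAt f (deriv f t) t := fun t =>
    (hf.differentiable (by norm_num) t).hasDerivAt
  have hf' : ContDiff ℝ 1 (deriv f) := hf.deriv'
  have hd' : ∀ t, HasDerivAt (deriv f) (deriv (deriv f) t) t := fun t =>
    (hf'.differentiable (by norm_num) t).hasDerivAt
  have hL0 : 0 ≤ L := (abs_nonneg _).trans (hL 0)
  have hpow : η ^ 2 * |η| ^ (-(1 + σ)) = |η| ^ (1 - σ) := by
    rw [← sq_abs, ← rpow_natCast, ← rpow_add (abs_pos.2 hη0)]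
    norm_num
    ring_nf
  calc |fracLapIntegrand σ f x η| = |2 * f x - f (x + η) - f (x - η)| * Kper σ η := by
        rw [fracLapIntegrand, abs_mul, abs_of_nonneg (Kper_nonneg σ η)]
    _ ≤ 2 * L * η ^ 2 * (|η| ^ (-(1 + σ)) + kernelTail σ) :=
        mul_le_mul (abs_two_mul_sub_sub_le hd (abs_sub_le_of_abs_deriv_le hd' hL) x η)
          (Kper_le hσ hη) (Kper_nonneg σ η) (by positivity)
    _ = fracLapMajorant σ L η := by rw [fracLapMajorant, ← hpow]; ring

lemma ae_norm_fracLapIntegrand_le (hσ : 0 < σ) (hf : ContDiff ℝ 2 f)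
    (hL : ∀ t, |deriv (deriv f) t| ≤ L) :
    ∀ᵐ η, η ∈ uIoc (-π) π → ∀ x, ‖fracLapIntegrand σ f x η‖ ≤ fracLapMajorant σ L η := by
  filter_upwards [Measure.ae_ne volume 0] with η hη0 hη x
  rw [uIoc_of_le (by linarith [pi_pos])] at hη
  exact abs_fracLapIntegrand_le hσ hf hL x hη0 (abs_le.2 ⟨hη.1.le, hη.2⟩)

lemma ae_restrict_norm_fracLapIntegrand_le (hσ : 0 < σ) (hf : ContDiff ℝ 2 f)
    (hL : ∀ t, |deriv (deriv f) t| ≤ L) (x : ℝ) :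
    ∀ᵐ η ∂volume.restrict (uIoc (-π) π), ‖fracLapIntegrand σ f x η‖ ≤ fracLapMajorant σ L η :=
  (ae_restrict_iff' measurableSet_uIoc).2 <|
    (ae_norm_fracLapIntegrand_le hσ hf hL).mono fun _ h hη => h hη x

lemma intervalIntegrable_fracLapIntegrand (hσ0 : 0 < σ) (hσ2 : σ < 2) (hf : ContDiff ℝ 2 f)
    (hL : ∀ t, |deriv (deriv f) t| ≤ L) (x : ℝ) :
    IntervalIntegrable (fracLapIntegrand σ f x) volume (-π) π :=
  (intervalIntegrable_fracLapMajorant hσ2 L).mono_fun'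
    (measurable_fracLapIntegrand σ hf.continuous.measurable x).aestronglyMeasurable
    (ae_restrict_norm_fracLapIntegrand_le hσ0 hf hL x)

lemma abs_fracLap_le (hσ0 : 0 < σ) (hσ2 : σ < 2) (hf : ContDiff ℝ 2 f)
    (hL : ∀ t, |deriv (deriv f) t| ≤ L) (x : ℝ) :
    |fracLap σ f x| ≤ |cFrac σ / 2| * |∫ η in (-π)..π, fracLapMajorant σ L η| := by
  rw [fracLap_eq_integral, abs_mul]
  exact mul_le_mul_of_nonneg_left (intervalIntegral.norm_integral_le_abs_of_norm_le
    (ae_restrict_norm_fracLapIntegrand_le hσ0 hf hL x) (intervalIntegrable_fracLapMajorant hσ2 L))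
    (abs_nonneg _)

lemma hasDerivAt_fracLap (hσ0 : 0 < σ) (hσ2 : σ < 2) (hf : ContDiff ℝ 3 f) {L₂ L₃ : ℝ}
    (hL₂ : ∀ t, |deriv (deriv f) t| ≤ L₂) (hL₃ : ∀ t, |deriv (deriv (deriv f)) t| ≤ L₃)
    (x : ℝ) : HasDerivAt (fracLap σ f) (fracLap σ (deriv f) x) x := by
  have hf' : ContDiff ℝ 2 (deriv f) := hf.deriv'
  have key := intervalIntegral.hasDerivAt_integral_of_dominated_loc_of_deriv_le
    (F' := fracLapIntegrand σ (deriv f)) (bound := fracLapMajorant σ L₃) univ_mem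
    (.of_forall fun y => (measurable_fracLapIntegrand σ hf.continuous.measurable y).aestronglyMeasurable)
    (intervalIntegrable_fracLapIntegrand hσ0 hσ2 (hf.of_le (by norm_num)) hL₂ x)
    (measurable_fracLapIntegrand σ hf'.continuous.measurable x).aestronglyMeasurable
    ((ae_norm_fracLapIntegrand_le hσ0 hf' hL₃).mono fun _ h hη y _ => h hη y)
    (intervalIntegrable_fracLapMajorant hσ2 L₃)
    (.of_forall fun η _ y _ => hasDerivAt_fracLapIntegrand σ (hf.differentiable (by norm_num)) y η)
  exact key.2.const_mul (cFrac σ / 2)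

end Integrand

namespace Function.Periodic

variable {f : ℝ → ℝ} {c : ℝ}

lemma deriv (hp : Periodic f c) : Periodic (deriv f) c := fun x => by
  rw [← deriv_comp_add_const, show (fun y => f (y + c)) = f from funext hp]

lemma exists_forall_le (hp : Periodic f c) (hc : c ≠ 0) (hf : Continuous f) :
    ∃ x₀, ∀ y, f y ≤ f x₀ := by
  obtain ⟨_, ⟨x₀, rfl⟩, hmax⟩ := (hp.compact_of_continuous hc hf).exists_isGreatest (range_nonempty f)
  exact ⟨x₀, fun y => hmax (mem_range_self y)⟩

lemma exists_forall_ge (hp : Periodic f c) (hc : c ≠ 0) (hf : Continuous f) :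
    ∃ x₀, ∀ y, f x₀ ≤ f y := by
  obtain ⟨_, ⟨x₀, rfl⟩, hmin⟩ := (hp.compact_of_continuous hc hf).exists_isLeast (range_nonempty f)
  exact ⟨x₀, fun y => hmin (mem_range_self y)⟩

lemma exists_abs_le (hp : Periodic f c) (hc : c ≠ 0) (hf : Continuous f) :
    ∃ M, ∀ x, |f x| ≤ M := by
  obtain ⟨M, hM⟩ := isBounded_iff_forall_norm_le.1 (hp.isBounded_of_continuous hc hf)
  exact ⟨M, fun x => hM _ (mem_range_self x)⟩

end Function.Periodic

section Periodic

variable {σ : ℝ} {f : ℝ → ℝ}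

lemma exists_abs_fracLap_le (hσ0 : 0 < σ) (hσ2 : σ < 2) (hf : ContDiff ℝ 2 f)
    (hp : Function.Periodic f (2 * π)) : ∃ M, ∀ x, |fracLap σ f x| ≤ M := by
  obtain ⟨L, hL⟩ := hp.deriv.deriv.exists_abs_le two_pi_pos.ne' (hf.deriv'.continuous_deriv le_rfl)
  exact ⟨_, abs_fracLap_le hσ0 hσ2 hf hL⟩

lemma hasDerivAt_fracLap_of_periodic (hσ0 : 0 < σ) (hσ2 : σ < 2) (hf : ContDiff ℝ 3 f)
    (hp : Function.Periodic f (2 * π)) (x : ℝ) :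
    HasDerivAt (fracLap σ f) (fracLap σ (deriv f) x) x := by
  have hf'' : ContDiff ℝ 1 (deriv (deriv f)) := hf.deriv'.deriv'
  obtain ⟨L₂, hL₂⟩ := hp.deriv.deriv.exists_abs_le two_pi_pos.ne' hf''.continuous
  obtain ⟨L₃, hL₃⟩ := hp.deriv.deriv.deriv.exists_abs_le two_pi_pos.ne'
    (hf''.continuous_deriv le_rfl)
  exact hasDerivAt_fracLap hσ0 hσ2 hf hL₂ hL₃ x

end Periodic

section MaximumPrinciple

variable {σ : ℝ} {f : ℝ → ℝ}

lemma cFrac_pos (hσ0 : 0 < σ) (hσ2 : σ < 2) : 0 < cFrac σ := by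
  have hΓ : 0 < Gamma (1 + σ) := Gamma_pos_of_pos (by linarith)
  have hcos : 0 < cos ((1 - σ) * π / 2) :=
    cos_pos_of_mem_Ioo ⟨by nlinarith [pi_pos], by nlinarith [pi_pos]⟩
  exact div_pos (mul_pos hΓ hcos) pi_pos

lemma fracLap_neg (σ : ℝ) (f : ℝ → ℝ) (x : ℝ) :
    fracLap σ (fun y => -f y) x = -fracLap σ f x := by
  rw [fracLap, fracLap, ← mul_neg, ← intervalIntegral.integral_neg]
  congr 1
  exact intervalIntegral.integral_congr fun η _ => by ring

lemma fracLap_nonneg_of_forall_le (hσ0 : 0 < σ) (hσ2 : σ < 2) {x : ℝ} (hmax : ∀ y, f y ≤ f x) :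
    0 ≤ fracLap σ f x :=
  mul_nonneg (div_nonneg (cFrac_pos hσ0 hσ2).le two_pos.le) <|
    intervalIntegral.integral_nonneg (by linarith [pi_pos]) fun η _ =>
      mul_nonneg (by linarith [hmax (x + η), hmax (x - η)]) (Kper_nonneg σ η)

lemma fracLap_nonpos_of_forall_ge (hσ0 : 0 < σ) (hσ2 : σ < 2) {x : ℝ} (hmin : ∀ y, f x ≤ f y) :
    fracLap σ f x ≤ 0 := by
  have := fracLap_nonneg_of_forall_le hσ0 hσ2 (f := fun y => -f y) fun y => neg_le_neg (hmin y)
  rw [fracLap_neg] at this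
  linarith

lemma abs_fracLap_le_two_mul (hσ0 : 0 < σ) (hσ2 : σ < 2) {w : ℝ → ℝ} (hw : Continuous w)
    (hp : Function.Periodic w (2 * π)) {S : ℝ} (hS : ∀ x, |w x + fracLap σ w x| ≤ S) (x : ℝ) :
    |fracLap σ w x| ≤ 2 * S := by
  obtain ⟨x₀, hx₀⟩ := hp.exists_forall_le two_pi_pos.ne' hw
  obtain ⟨x₁, hx₁⟩ := hp.exists_forall_ge two_pi_pos.ne' hw
  have hmax : w x₀ ≤ S := by
    linarith [fracLap_nonneg_of_forall_le hσ0 hσ2 hx₀, (abs_le.1 (hS x₀)).2]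
  have hmin : -S ≤ w x₁ := by
    linarith [fracLap_nonpos_of_forall_ge hσ0 hσ2 hx₁, (abs_le.1 (hS x₁)).1]
  have hwx : |w x| ≤ S := abs_le.2 ⟨hmin.trans (hx₁ x), (hx₀ x).trans hmax⟩
  calc |fracLap σ w x| = |(w x + fracLap σ w x) - w x| := by rw [add_sub_cancel_left]
    _ ≤ |w x + fracLap σ w x| + |w x| := abs_sub _ _
    _ ≤ 2 * S := by linarith [hS x]

end MaximumPrinciple

theorem stmt3_general (β : ℝ) (hβ0 : 0 < β) (hβ2 : β < 2)
    (v : ℝ → ℝ) (hv : ContDiff ℝ 3 v) (hvper : Function.Periodic v (2 * Real.pi))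
    (u : ℝ → ℝ) (hu : ∀ x, u x = v x + fracLap β v x) :
    ∀ x, |deriv (fracLap β v) x| ≤ 4 * ⨆ y, |deriv u y| := by
  have hΛv := hasDerivAt_fracLap_of_periodic hβ0 hβ2 hv hvper
  have hu' : ∀ x, deriv u x = deriv v x + fracLap β (deriv v) x := fun x => by
    rw [funext hu]
    exact ((hv.differentiable (by norm_num) x).hasDerivAt.add (hΛv x)).deriv
  have hbdd : BddAbove (range fun y => |deriv u y|) := by
    obtain ⟨L, hL⟩ := hvper.deriv.exists_abs_le two_pi_pos.ne' (hv.continuous_deriv (by norm_num))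
    obtain ⟨M, hM⟩ := exists_abs_fracLap_le hβ0 hβ2 hv.deriv' hvper.deriv
    refine ⟨L + M, forall_mem_range.2 fun y => ?_⟩
    rw [hu']
    exact (abs_add_le _ _).trans (add_le_add (hL y) (hM y))
  have hS : ∀ y, |deriv u y| ≤ ⨆ y, |deriv u y| := le_ciSup hbdd
  intro x
  rw [(hΛv x).deriv]
  have := abs_fracLap_le_two_mul hβ0 hβ2 (hv.continuous_deriv (by norm_num)) hvper.deriv
    (fun y => hu' y ▸ hS y) x
  linarith [(abs_nonneg _).trans (hS 0)]

theorem stmt3 (β : ℝ) (hβ0 : 0 < β) (hβ2 : β < 2)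
    (v : ℝ → ℝ) (hv : ContDiff ℝ 3 v) (hvper : Function.Periodic v (2 * Real.pi))
    (u : ℝ → ℝ) (hu : ∀ x, u x = v x + fracLap β v x)
    (hupos : ∀ x, 0 ≤ u x) :
    ∀ x, |deriv (fracLap β v) x| ≤ 4 * ⨆ y, |deriv u y| :=
  stmt3_general β hβ0 hβ2 v hv hvper u hu
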